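/- Let p be a prime, G a finite group, N a normal subgroup of G, and T a p-subgroup of G. Write NT for the subgroup N ⊔ T of G. Then for every subgroup P of G, O^p(N_{NT}(P)) = O^p(N_N(P)), where N_H(P) denotes the normalizer of P in H; consequently O^p(Aut_{NT}(P)) = O^p(Aut_N(P)). -/

import Mathlib

/-- The subgroup of `MulAut ↥P` consisting of automorphisms of `P` induced by
conjugation by elements of `H` normalizing `P`. -/
def autBy {G : Type*} [Group G] (H P : Subgroup G) : Subgroup (MulAut ↥P) :=
  Subgroup.closure
    {φ : MulAut ↥P | ∃ h ∈ H, h ∈ Subgroup.normalizer (P : Set G) ∧ ∀ x : ↥P, (φ x : G) = h⁻¹ * x * h}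

/-- `O^p(K)`: the subgroup generated by the elements of `K` of order coprime to `p`. -/
def Op (p : ℕ) {M : Type*} [Group M] (K : Subgroup M) : Subgroup M :=
  Subgroup.closure {x : M | x ∈ K ∧ Nat.Coprime (orderOf x) p}

/-!
Modulo `N`, every element of `NT` is a `p`-element. So a `p'`-element `x` of `NT` has a power
`x ^ p ^ b ∈ N` with exponent prime to its order, and `x` is a power of `x ^ p ^ b`, hence lies
in `N`. The same argument applies to an automorphism of `P` induced by `h ∈ N_{NT}(P)`: its
`p ^ b`-th power is induced by `h ^ p ^ b ∈ N_N(P)`.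
-/

lemma Subgroup.mem_of_pow_mem_of_coprime {M : Type*} [Group M] {K : Subgroup M} {x : M} {n : ℕ}
    (hn : n.Coprime (orderOf x)) (hx : x ^ n ∈ K) : x ∈ K := by
  obtain ⟨m, hm⟩ := exists_pow_eq_self_of_coprime hn
  exact hm ▸ K.pow_mem hx m

lemma exists_pow_pow_mem_of_mem_sup {p : ℕ} {G : Type*} [Group G] (N : Subgroup G)
    [N.Normal] {T : Subgroup G} (hT : IsPGroup p T) {g : G} (hg : g ∈ N ⊔ T) :
    ∃ b : ℕ, g ^ p ^ b ∈ N := by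
  rw [← SetLike.mem_coe, Subgroup.normal_mul] at hg
  obtain ⟨n, hn, t, ht, rfl⟩ := hg
  obtain ⟨b, hb⟩ := hT ⟨t, ht⟩
  have htb : t ^ p ^ b = 1 := congrArg Subtype.val hb
  refine ⟨b, ?_⟩
  rw [← QuotientGroup.eq_one_iff, QuotientGroup.mk_pow, QuotientGroup.mk_mul,
    (QuotientGroup.eq_one_iff n).mpr hn, one_mul, ← QuotientGroup.mk_pow, htb, QuotientGroup.mk_one]

lemma mem_of_mem_sup_of_coprime_orderOf {p : ℕ} {G : Type*} [Group G] (N : Subgroup G)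
    [N.Normal] {T : Subgroup G} (hT : IsPGroup p T) {x : G} (hx : x ∈ N ⊔ T)
    (hcop : (orderOf x).Coprime p) : x ∈ N := by
  obtain ⟨b, hb⟩ := exists_pow_pow_mem_of_mem_sup N hT hx
  exact Subgroup.mem_of_pow_mem_of_coprime (hcop.symm.pow_left b) hb

lemma Op_congr {p : ℕ} {M : Type*} [Group M] {K L : Subgroup M}
    (h : ∀ x : M, (orderOf x).Coprime p → (x ∈ K ↔ x ∈ L)) : Op p K = Op p L := by
  unfold Op
  congr 1
  ext x
  exact ⟨fun hx => ⟨(h x hx.2).mp hx.1, hx.2⟩, fun hx => ⟨(h x hx.2).mpr hx.1, hx.2⟩⟩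

section autBy

variable {G : Type*} [Group G] {H K P : Subgroup G}

lemma autBy_mono (hHK : H ≤ K) : autBy H P ≤ autBy K P :=
  Subgroup.closure_mono fun _ ⟨h, hH, hrest⟩ => ⟨h, hHK hH, hrest⟩

lemma exists_of_mem_autBy {φ : MulAut ↥P} (hφ : φ ∈ autBy H P) :
    ∃ h ∈ H, h ∈ Subgroup.normalizer (P : Set G) ∧ ∀ x : ↥P, (φ x : G) = h⁻¹ * x * h := by
  induction hφ using Subgroup.closure_induction with
  | mem φ hφ => exact hφ
  | one => exact ⟨1, H.one_mem, Subgroup.one_mem _, fun x => by simp⟩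
  | mul φ ψ _ _ ihφ ihψ =>
    obtain ⟨h, hH, hnorm, hφ⟩ := ihφ
    obtain ⟨k, kH, knorm, hψ⟩ := ihψ
    refine ⟨k * h, H.mul_mem kH hH, Subgroup.mul_mem _ knorm hnorm, fun x => ?_⟩
    change (φ (ψ x) : G) = _
    rw [hφ, hψ]
    group
  | inv φ _ ih =>
    obtain ⟨h, hH, hnorm, hφ⟩ := ih
    refine ⟨h⁻¹, H.inv_mem hH, Subgroup.inv_mem _ hnorm, fun x => ?_⟩
    have := hφ (φ⁻¹ x)
    rw [MulAut.apply_inv_self] at this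
    rw [this]
    group

lemma pow_apply_eq_conj_pow {φ : MulAut ↥P} {h : G} (hφ : ∀ x : ↥P, (φ x : G) = h⁻¹ * x * h)
    (k : ℕ) (x : ↥P) : ((φ ^ k) x : G) = (h ^ k)⁻¹ * x * h ^ k := by
  induction k generalizing x with
  | zero => simp
  | succ k ih =>
    rw [pow_succ', MulAut.mul_apply, hφ, ih, pow_succ]
    group

lemma exists_pow_pow_mem_autBy {p : ℕ} (N : Subgroup G) [N.Normal] {T : Subgroup G}
    (hT : IsPGroup p T) {φ : MulAut ↥P} (hφ : φ ∈ autBy (N ⊔ T) P) :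
    ∃ b : ℕ, φ ^ p ^ b ∈ autBy N P := by
  obtain ⟨h, hNT, hnorm, hconj⟩ := exists_of_mem_autBy hφ
  obtain ⟨b, hb⟩ := exists_pow_pow_mem_of_mem_sup N hT hNT
  exact ⟨b, Subgroup.subset_closure
    ⟨h ^ p ^ b, hb, Subgroup.pow_mem _ hnorm _, pow_apply_eq_conj_pow hconj _⟩⟩

end autBy

theorem stmt2_general (p : ℕ) {G : Type*} [Group G]
    (N : Subgroup G) [N.Normal] (T : Subgroup G) (hT : IsPGroup p T) :
    ∀ P : Subgroup G,
      Op p ((N ⊔ T) ⊓ Subgroup.normalizer (P : Set G)) = Op p (N ⊓ Subgroup.normalizer (P : Set G)) ∧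
        Op p (autBy (N ⊔ T) P) = Op p (autBy N P) := by
  intro P
  constructor
  · refine Op_congr fun x hcop => ⟨fun hx => ?_, fun hx => ⟨Subgroup.mem_sup_left hx.1, hx.2⟩⟩
    exact ⟨mem_of_mem_sup_of_coprime_orderOf N hT hx.1 hcop, hx.2⟩
  · refine Op_congr fun φ hcop => ⟨fun hφ => ?_, fun hφ => autBy_mono le_sup_left hφ⟩
    obtain ⟨b, hb⟩ := exists_pow_pow_mem_autBy N hT hφ
    exact Subgroup.mem_of_pow_mem_of_coprime (hcop.symm.pow_left b) hb

theorem stmt2 (p : ℕ) (hp : p.Prime) {G : Type*} [Group G] [Finite G]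
    (N : Subgroup G) [N.Normal] (T : Subgroup G) (hT : IsPGroup p T) :
    ∀ P : Subgroup G,
      Op p ((N ⊔ T) ⊓ Subgroup.normalizer (P : Set G)) = Op p (N ⊓ Subgroup.normalizer (P : Set G)) ∧
        Op p (autBy (N ⊔ T) P) = Op p (autBy N P) :=
  stmt2_general p N T hT
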